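/- Let κ ≥ 3 be a cardinal and let α ≥ 1 be a countable ordinal. Let G^α_{L_0} denote the setwise stabiliser of L_0 in the isometry group of T_κ^{[α]}. Then the homomorphism G^α_{L_0} → Isom(L_0) induced by restriction is surjective; in particular, for every r > 0 there is an isometry of T_κ^{[α]} preserving L_0 and acting on L_0 ≅ ℝ as the translation by r, and there is an isometry of T_κ^{[α]} preserving L_0 and acting on L_0 as a reflection. -/

import Mathlib

open Set Filter

noncomputable section

/-- `C` is a valid label set for the valence cardinal `κ`:
`|C| = κ` if `κ` is infinite and `|C| + 1 = κ` (i.e. `|C| = κ - 1`) if `κ` is finite. -/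
def IsLabelSet (κ : Cardinal) (C : Type) : Prop :=
  (Cardinal.aleph0 ≤ κ → Cardinal.mk C = κ) ∧ (κ < Cardinal.aleph0 → Cardinal.mk C + 1 = κ)

/-- An ordinal is countable. -/
def IsCountableOrdinal (o : Ordinal) : Prop := o.card ≤ Cardinal.aleph0

/-- One-step Cantor–Bendixson derivative of a set: its non-isolated points. -/
def cbStep {X : Type*} [TopologicalSpace X] (A : Set X) : Set X :=
  {x | x ∈ A ∧ AccPt x (Filter.principal A)}

/-- The iterated Cantor–Bendixson derivative of a set. -/
def cbDeriv {X : Type*} [TopologicalSpace X] (A : Set X) (o : Ordinal) : Set X :=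
  Ordinal.limitRecOn o A (fun _ ih => cbStep ih)
    (fun o _ ih => ⋂ (o' : Ordinal) (h : o' < o), ih o' h)

/-- The Cantor–Bendixson rank of a set: the least ordinal `γ` such that the `(γ+1)`-st
Cantor–Bendixson derivative equals the `γ`-th one. -/
def cbRank {X : Type*} [TopologicalSpace X] (A : Set X) : Ordinal :=
  sInf {γ | cbDeriv A (γ + 1) = cbDeriv A γ}

theorem cbDeriv_zero {X : Type*} [TopologicalSpace X] (A : Set X) : cbDeriv A 0 = A :=
  Ordinal.limitRecOn_zero ..

theorem cbDeriv_one {X : Type*} [TopologicalSpace X] (A : Set X) :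
    cbDeriv A 1 = cbStep A := by
  have : (1 : Ordinal) = Order.succ 0 := by
    rw [← Ordinal.add_one_eq_succ, zero_add]
  rw [cbDeriv, this, Ordinal.limitRecOn_succ]
  rw [← cbDeriv, cbDeriv_zero]

theorem cbStep_empty {X : Type*} [TopologicalSpace X] : cbStep (∅ : Set X) = ∅ := by
  ext x; simp [cbStep]

theorem cbRank_empty {X : Type*} [TopologicalSpace X] : cbRank (∅ : Set X) = 0 := by
  refine le_antisymm ?_ zero_le
  refine csInf_le' ?_
  show cbDeriv (∅ : Set X) (0 + 1) = cbDeriv (∅ : Set X) 0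
  rw [zero_add, cbDeriv_one, cbDeriv_zero, cbStep_empty]

/-- A point of Dyubina's universal real tree over the label set `C` (with distinguished label
`z`): a function `(-∞, ρ) → C`, encoded as a total function on `ℝ` which takes the value `z`
on `[ρ, ∞)`, which is eventually `z` near `-∞` and piecewise constant from the right. -/
structure UTree (C : Type) (z : C) where
  ρ : ℝ
  f : ℝ → C
  apply_eq_of_ge : ∀ t, ρ ≤ t → f t = z
  eventually_zero : ∃ s, s ≤ ρ ∧ ∀ t, t < s → f t = z
  piecewise_const : ∀ t, t < ρ → ∃ ε > 0, ∀ u, t ≤ u → u ≤ t + ε → u < ρ → f u = f t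

namespace UTree

variable {C : Type} {z : C}

theorem ext' {a b : UTree C z} (h1 : a.ρ = b.ρ) (h2 : a.f = b.f) : a = b := by
  cases a; cases b; cases h1; cases h2; rfl

/-- The partial order `⪯` : `a ⪯ b` iff `a` is the restriction of `b` to `(-∞, ρ_a)`. -/
protected def le (a b : UTree C z) : Prop :=
  a.ρ ≤ b.ρ ∧ ∀ t, t < a.ρ → a.f t = b.f t

/-- The strict order `≺`. -/
protected def lt (a b : UTree C z) : Prop := a.le b ∧ a ≠ b

/-- The set of times up to which `a` and `b` agree. -/
def agreeSet (a b : UTree C z) : Set ℝ :=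
  {t | t ≤ min a.ρ b.ρ ∧ ∀ u, u < t → a.f u = b.f u}

theorem agreeSet_nonempty (a b : UTree C z) : (agreeSet a b).Nonempty := by
  obtain ⟨s₁, hs₁, h₁⟩ := a.eventually_zero
  obtain ⟨s₂, hs₂, h₂⟩ := b.eventually_zero
  refine ⟨min s₁ s₂, le_min ((min_le_left _ _).trans hs₁) ((min_le_right _ _).trans hs₂), ?_⟩
  intro u hu
  rw [h₁ u (lt_of_lt_of_le hu (min_le_left _ _)), h₂ u (lt_of_lt_of_le hu (min_le_right _ _))]

theorem agreeSet_bddAbove (a b : UTree C z) : BddAbove (agreeSet a b) :=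
  ⟨min a.ρ b.ρ, fun _ ht => ht.1⟩

/-- `ρ_{a ∧ b}`, the height of the wedge of `a` and `b`. -/
def wedgeρ (a b : UTree C z) : ℝ := sSup (agreeSet a b)

theorem wedgeρ_le_min (a b : UTree C z) : wedgeρ a b ≤ min a.ρ b.ρ :=
  csSup_le (agreeSet_nonempty a b) fun _ ht => ht.1

theorem agree_of_lt_wedgeρ (a b : UTree C z) {u : ℝ} (hu : u < wedgeρ a b) :
    a.f u = b.f u := by
  obtain ⟨t, ht, hut⟩ := exists_lt_of_lt_csSup (agreeSet_nonempty a b) hu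
  exact ht.2 u hut

theorem le_wedgeρ {a b : UTree C z} {t : ℝ} (ht : t ∈ agreeSet a b) : t ≤ wedgeρ a b :=
  le_csSup (agreeSet_bddAbove a b) ht

theorem wedgeρ_comm (a b : UTree C z) : wedgeρ a b = wedgeρ b a := by
  unfold wedgeρ agreeSet
  congr 1
  ext t
  constructor <;> rintro ⟨h1, h2⟩ <;>
    exact ⟨by rwa [min_comm], fun u hu => (h2 u hu).symm⟩

theorem wedgeρ_self (a : UTree C z) : wedgeρ a a = a.ρ := by
  refine le_antisymm ((wedgeρ_le_min a a).trans (by simp)) ?_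
  exact le_wedgeρ ⟨by simp, fun _ _ => rfl⟩

/-- Restriction of `a` to `(-∞, s)` for `s ≤ ρ_a`. -/
def restrict (a : UTree C z) (s : ℝ) (hs : s ≤ a.ρ) : UTree C z where
  ρ := s
  f := fun t => if t < s then a.f t else z
  apply_eq_of_ge := fun t ht => by
    show (if t < s then a.f t else z) = z
    rw [if_neg (not_lt.mpr ht)]
  eventually_zero := by
    obtain ⟨s', hs', h'⟩ := a.eventually_zero
    refine ⟨min s' s, min_le_right _ _, fun t ht => ?_⟩
    show (if t < s then a.f t else z) = z
    by_cases h : t < s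
    · rw [if_pos h]; exact h' t (lt_of_lt_of_le ht (min_le_left _ _))
    · rw [if_neg h]
  piecewise_const := fun t ht => by
    obtain ⟨ε, hε, h⟩ := a.piecewise_const t (lt_of_lt_of_le ht hs)
    refine ⟨ε, hε, fun u hu1 hu2 hu3 => ?_⟩
    show (if u < s then a.f u else z) = (if t < s then a.f t else z)
    rw [if_pos hu3, if_pos ht]
    exact h u hu1 hu2 (lt_of_lt_of_le hu3 hs)

/-- The wedge `a ∧ b`: the restriction of `a` to `(-∞, ρ_{a ∧ b})`. -/
def wedge (a b : UTree C z) : UTree C z :=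
  a.restrict (wedgeρ a b) ((wedgeρ_le_min a b).trans (min_le_left _ _))

theorem min_wedgeρ_le (a b c : UTree C z) :
    min (wedgeρ a b) (wedgeρ b c) ≤ wedgeρ a c := by
  refine le_wedgeρ ⟨le_min ?_ ?_, fun u hu => ?_⟩
  · exact (min_le_left _ _).trans ((wedgeρ_le_min a b).trans (min_le_left _ _))
  · exact (min_le_right _ _).trans ((wedgeρ_le_min b c).trans (min_le_right _ _))
  · have h1 : a.f u = b.f u :=
      agree_of_lt_wedgeρ a b (lt_of_lt_of_le hu (min_le_left _ _))
    have h2 : b.f u = c.f u :=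
      agree_of_lt_wedgeρ b c (lt_of_lt_of_le hu (min_le_right _ _))
    exact h1.trans h2

/-- The metric `d(a,b) = ρ_a + ρ_b - 2 ρ_{a ∧ b}` on the universal real tree. -/
instance : MetricSpace (UTree C z) where
  dist a b := a.ρ + b.ρ - 2 * wedgeρ a b
  dist_self a := by simp [wedgeρ_self]; ring
  dist_comm a b := by simp only [wedgeρ_comm a b]; ring
  dist_triangle a b c := by
    have hmin := min_wedgeρ_le a b c
    have h1 : wedgeρ a b ≤ b.ρ := (wedgeρ_le_min a b).trans (min_le_right _ _)
    have h2 : wedgeρ b c ≤ b.ρ := (wedgeρ_le_min b c).trans (min_le_left _ _)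
    rcases min_cases (wedgeρ a b) (wedgeρ b c) with ⟨heq, hle⟩ | ⟨heq, hle⟩ <;>
      (rw [heq] at hmin;
        show a.ρ + c.ρ - 2 * wedgeρ a c ≤ (a.ρ + b.ρ - 2 * wedgeρ a b) + (b.ρ + c.ρ - 2 * wedgeρ b c);
        linarith)
  eq_of_dist_eq_zero := by
    intro a b h
    have h1 : wedgeρ a b ≤ a.ρ := (wedgeρ_le_min a b).trans (min_le_left _ _)
    have h2 : wedgeρ a b ≤ b.ρ := (wedgeρ_le_min a b).trans (min_le_right _ _)
    have hd : a.ρ + b.ρ - 2 * wedgeρ a b = 0 := h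
    have ha : a.ρ = wedgeρ a b := by linarith
    have hb : b.ρ = wedgeρ a b := by linarith
    refine ext' (ha.trans hb.symm) (funext fun t => ?_)
    by_cases ht : t < wedgeρ a b
    · exact agree_of_lt_wedgeρ a b ht
    · rw [a.apply_eq_of_ge t (ha.le.trans (not_lt.mp ht)),
        b.apply_eq_of_ge t (hb.le.trans (not_lt.mp ht))]

theorem dist_def (a b : UTree C z) : dist a b = a.ρ + b.ρ - 2 * wedgeρ a b := rfl

/-- The point `c_ℓ`: the constant function `(-∞, ℓ) → C` with value `z`. -/
def cconst (ℓ : ℝ) : UTree C z where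
  ρ := ℓ
  f := fun _ => z
  apply_eq_of_ge := fun _ _ => rfl
  eventually_zero := ⟨ℓ, le_refl ℓ, fun _ _ => rfl⟩
  piecewise_const := fun _ _ => ⟨1, one_pos, fun _ _ _ _ => rfl⟩

/-- The set of points at which `a` is locally non-constant from the left, whose closure is the
set `P_a`. -/
def badSet (a : UTree C z) : Set ℝ :=
  {t | t < a.ρ ∧ ∀ ε > 0, ∃ u ∈ Icc (t - ε) t, ∃ v ∈ Icc (t - ε) t, a.f u ≠ a.f v}

/-- The set `P_a`. -/
def Pset (a : UTree C z) : Set ℝ := closure (badSet a)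

/-- The complexity of `a`: the Cantor–Bendixson rank of `P_a`. -/
def comp (a : UTree C z) : Ordinal := cbRank (Pset a)

/-- The complexity of a pair `a ≺ b`: the Cantor–Bendixson rank of `P_b ∩ [ρ_a, ρ_b]`. -/
def pairComp (a b : UTree C z) : Ordinal := cbRank (Pset b ∩ Icc a.ρ b.ρ)

/-- `τ_a`: the maximum of all `s ≤ ρ_a` such that `a` is `z` below `s`. -/
def tau (a : UTree C z) : ℝ := sSup {s | s ≤ a.ρ ∧ ∀ t, t < s → a.f t = z}

/-- The tree `T_κ^{[α]}` of points of complexity at most `α`. -/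
def level (z : C) (α : Ordinal) : Set (UTree C z) := {a | comp a ≤ α}

theorem Pset_cconst (ℓ : ℝ) : Pset (cconst ℓ : UTree C z) = ∅ := by
  have : badSet (cconst ℓ : UTree C z) = ∅ := by
    ext t
    simp only [badSet, mem_setOf_eq, mem_empty_iff_false, iff_false, not_and]
    intro _
    push_neg
    exact ⟨1, one_pos, fun u _ v _ => rfl⟩
  rw [Pset, this, closure_empty]

theorem comp_cconst (ℓ : ℝ) : comp (cconst ℓ : UTree C z) = 0 := by
  rw [comp, Pset_cconst, cbRank_empty]

theorem cconst_mem_level {ℓ : ℝ} (α : Ordinal) : (cconst ℓ : UTree C z) ∈ level z α := by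
  show comp _ ≤ α
  rw [comp_cconst]
  exact zero_le

/-- The canonical line `L_0 = {c_ℓ : ℓ ∈ ℝ}`. -/
def L0 (z : C) : Set (UTree C z) := Set.range fun ℓ => (cconst ℓ : UTree C z)

/-- The extension of `a` by the label `c` on `[ρ_a, ρ_a + 1)`. -/
def extend (a : UTree C z) (c : C) : UTree C z where
  ρ := a.ρ + 1
  f := fun t => if t < a.ρ then a.f t else if t < a.ρ + 1 then c else z
  apply_eq_of_ge := fun t ht => by
    show (if t < a.ρ then a.f t else if t < a.ρ + 1 then c else z) = z
    rw [if_neg (not_lt.mpr (by linarith)), if_neg (not_lt.mpr ht)]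
  eventually_zero := by
    obtain ⟨s, hs, h⟩ := a.eventually_zero
    refine ⟨min s a.ρ, by have := min_le_right s a.ρ; linarith, fun t ht => ?_⟩
    show (if t < a.ρ then a.f t else if t < a.ρ + 1 then c else z) = z
    rw [if_pos (lt_of_lt_of_le ht (min_le_right _ _))]
    exact h t (lt_of_lt_of_le ht (min_le_left _ _))
  piecewise_const := by
    intro t ht
    by_cases htρ : t < a.ρ
    · obtain ⟨ε, hε, h⟩ := a.piecewise_const t htρ
      refine ⟨min ε ((a.ρ - t) / 2), lt_min hε (by linarith), fun u hu1 hu2 _ => ?_⟩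
      have hu3 : u < a.ρ := by
        have := hu2.trans (add_le_add (le_refl t) (min_le_right _ _))
        linarith
      show (if u < a.ρ then a.f u else if u < a.ρ + 1 then c else z) =
        (if t < a.ρ then a.f t else if t < a.ρ + 1 then c else z)
      rw [if_pos hu3, if_pos htρ]
      exact h u hu1 (hu2.trans (add_le_add (le_refl t) (min_le_left _ _))) hu3
    · refine ⟨(a.ρ + 1 - t) / 2, by linarith, fun u hu1 hu2 _ => ?_⟩
      have h1 : ¬u < a.ρ := by push_neg at htρ ⊢; linarith
      have h2 : u < a.ρ + 1 := by linarith
      show (if u < a.ρ then a.f u else if u < a.ρ + 1 then c else z) =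
        (if t < a.ρ then a.f t else if t < a.ρ + 1 then c else z)
      rw [if_neg h1, if_pos h2, if_neg htρ, if_pos ht]

end UTree

/-- A subset of a metric space is (geodesically) convex if it contains every point
metrically between two of its points. -/
def MetricConvex {X : Type*} [MetricSpace X] (S : Set X) : Prop :=
  ∀ x ∈ S, ∀ y ∈ S, ∀ w, dist x w + dist w y = dist x y → w ∈ S

/-- `D` is a direction at `x`: a connected component of the complement of `{x}`. -/
def IsDirectionAt {X : Type*} [TopologicalSpace X] (x : X) (D : Set X) : Prop :=
  ∃ y, y ≠ x ∧ D = connectedComponentIn {w | w ≠ x} y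

/-- The valence of a space at a point: the number of connected components of the
complement of that point. -/
def valenceAt {X : Type*} [TopologicalSpace X] (x : X) : Cardinal :=
  Cardinal.mk {D : Set X // IsDirectionAt x D}

/-- A real tree: a geodesic metric space in which any two points are joined by a unique arc. -/
def IsRealTree (X : Type*) [MetricSpace X] : Prop :=
  (∀ x y : X, ∃ γ : ℝ → X, γ 0 = x ∧ γ (dist x y) = y ∧
      ∀ s ∈ Icc (0 : ℝ) (dist x y), ∀ t ∈ Icc (0 : ℝ) (dist x y),
        dist (γ s) (γ t) = |s - t|) ∧
  (∀ (x y : X) (γ₁ γ₂ : Path x y), Function.Injective γ₁ → Function.Injective γ₂ →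
      Set.range γ₁ = Set.range γ₂)

/-! Translations of the time axis act on `T_κ` by isometries, and they preserve complexity
because they merely translate `P_f`. For the reflection, let `τ_f` be the time at which `f`
leaves the line `L_0`, and shift every `f` by `c - 2 τ_f`; this sends `c_ℓ` to `c_{c-ℓ}`. If
`τ_a < τ_b` then `ρ_{a∧b} = τ_a`, and the shift reverses the order of `τ_a` and `τ_b`, so that
`d(a, b) = ρ_a + ρ_b - 2 τ_a` is preserved. By Mazur–Ulam every isometry of `ℝ` is a translation
or a reflection. -/

section CantorBendixson

variable {X Y : Type*} [TopologicalSpace X] [TopologicalSpace Y]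

theorem cbDeriv_add_one (A : Set X) (o : Ordinal) :
    cbDeriv A (o + 1) = cbStep (cbDeriv A o) := by
  rw [cbDeriv, Ordinal.limitRecOn_add_one]
  rfl

theorem cbDeriv_of_isSuccLimit (A : Set X) {o : Ordinal} (ho : Order.IsSuccLimit o) :
    cbDeriv A o = ⋂ (o' : Ordinal) (_ : o' < o), cbDeriv A o' := by
  rw [cbDeriv, Ordinal.limitRecOn_limit _ _ _ _ ho]
  rfl

theorem Homeomorph.image_derivedSet (e : X ≃ₜ Y) (A : Set X) :
    e '' derivedSet A = derivedSet (e '' A) := by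
  refine (e.continuous.image_derivedSet e.injective).antisymm fun y hy => ?_
  rw [← e.apply_symm_apply y]
  refine mem_image_of_mem e ?_
  have := e.symm.continuous.image_derivedSet e.symm.injective (mem_image_of_mem e.symm hy)
  rwa [← e.coe_toEquiv, ← e.coe_symm_toEquiv, e.toEquiv.symm_image_image] at this

theorem Homeomorph.image_cbStep (e : X ≃ₜ Y) (A : Set X) :
    e '' cbStep A = cbStep (e '' A) := by
  change e '' (A ∩ derivedSet A) = e '' A ∩ derivedSet (e '' A)
  rw [image_inter e.injective, e.image_derivedSet]

theorem Homeomorph.image_cbDeriv (e : X ≃ₜ Y) (A : Set X) (o : Ordinal) :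
    e '' cbDeriv A o = cbDeriv (e '' A) o := by
  induction o using Ordinal.limitRecOn with
  | zero => rw [cbDeriv_zero, cbDeriv_zero]
  | add_one o ih =>
    rw [cbDeriv_add_one, cbDeriv_add_one, ← ih, e.image_cbStep]
  | limit o ho ih =>
    rw [cbDeriv_of_isSuccLimit _ ho, cbDeriv_of_isSuccLimit _ ho, image_iInter₂ e.bijective]
    exact iInter₂_congr ih

theorem Homeomorph.cbRank_image (e : X ≃ₜ Y) (A : Set X) : cbRank (e '' A) = cbRank A := by
  simp only [cbRank, ← e.image_cbDeriv, (image_injective.mpr e.injective).eq_iff]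

end CantorBendixson

theorem IsometryEquiv.real_eq_add_or_eq_sub (θ : ℝ ≃ᵢ ℝ) :
    (∀ x, θ x = x + θ 0) ∨ (∀ x, θ x = θ 0 - x) := by
  set L := θ.toRealAffineIsometryEquiv.linearIsometryEquiv
  have hθ : ∀ x, θ x = x * L 1 + θ 0 := fun x => by
    have h := θ.toRealAffineIsometryEquiv.map_vsub x 0
    rw [vsub_eq_sub, vsub_eq_sub, sub_zero, IsometryEquiv.coeFn_toRealAffineIsometryEquiv] at h
    rw [← smul_eq_mul, ← L.map_smul, smul_eq_mul, mul_one, h, sub_add_cancel]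
  have hL : |L 1| = 1 := by
    rw [← Real.norm_eq_abs, L.norm_map, norm_one]
  rcases (abs_eq zero_le_one).mp hL with h | h
  · exact Or.inl fun x => by rw [hθ, h, mul_one]
  · exact Or.inr fun x => by rw [hθ, h]; ring

theorem Real.sSup_image_add_const {S : Set ℝ} (hS : S.Nonempty) (hSb : BddAbove S) (δ : ℝ) :
    sSup ((· + δ) '' S) = sSup S + δ :=
  ((OrderIso.addRight δ).map_csSup' hS hSb).symm

namespace UTree

variable {C : Type} {z : C}

section tau

variable (a : UTree C z)

theorem tauSet_nonempty : {s | s ≤ a.ρ ∧ ∀ t, t < s → a.f t = z}.Nonempty :=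
  a.eventually_zero

theorem tauSet_bddAbove : BddAbove {s | s ≤ a.ρ ∧ ∀ t, t < s → a.f t = z} :=
  ⟨a.ρ, fun _ h => h.1⟩

theorem tau_le_ρ : tau a ≤ a.ρ :=
  csSup_le a.tauSet_nonempty fun _ h => h.1

theorem apply_eq_of_lt_tau {t : ℝ} (ht : t < tau a) : a.f t = z := by
  obtain ⟨s, hs, hts⟩ := exists_lt_of_lt_csSup a.tauSet_nonempty ht
  exact hs.2 t hts

variable {a}

theorem le_tau {s : ℝ} (hs : s ≤ a.ρ) (h : ∀ t, t < s → a.f t = z) : s ≤ tau a :=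
  le_csSup a.tauSet_bddAbove ⟨hs, h⟩

theorem apply_tau_ne (h : tau a < a.ρ) : a.f (tau a) ≠ z := by
  intro hz
  obtain ⟨ε, hε, hconst⟩ := a.piecewise_const (tau a) h
  have hle : min (tau a + ε) a.ρ ≤ tau a := by
    refine le_tau (min_le_right _ _) fun t ht => ?_
    rcases lt_or_ge t (tau a) with h' | h'
    · exact a.apply_eq_of_lt_tau h'
    · rw [hconst t h' (ht.trans_le (min_le_left _ _)).le (ht.trans_le (min_le_right _ _)), hz]
  exact hle.not_gt (lt_min (by linarith) h)

end tau

/-- Below `τ_a < τ_b` both points lie on `L_0`, while at `τ_a` the point `a` leaves it. -/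
theorem wedgeρ_eq_tau_of_tau_lt {a b : UTree C z} (h : tau a < tau b) : wedgeρ a b = tau a := by
  refine le_antisymm ?_ ?_
  · rcases (tau_le_ρ a).eq_or_lt with hρ | hρ
    · exact ((wedgeρ_le_min a b).trans (min_le_left _ _)).trans_eq hρ.symm
    · by_contra! hc
      exact apply_tau_ne hρ ((agree_of_lt_wedgeρ a b hc).trans (b.apply_eq_of_lt_tau h))
  · refine le_wedgeρ ⟨le_min (tau_le_ρ a) (h.le.trans (tau_le_ρ b)), fun u hu => ?_⟩
    rw [a.apply_eq_of_lt_tau hu, b.apply_eq_of_lt_tau (hu.trans h)]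

theorem tau_cconst (ℓ : ℝ) : tau (cconst ℓ : UTree C z) = ℓ := by
  have : {s | s ≤ (cconst ℓ : UTree C z).ρ ∧ ∀ t, t < s → (cconst ℓ : UTree C z).f t = z}
      = Iic ℓ := by
    ext s
    exact ⟨fun h => h.1, fun h => ⟨h, fun _ _ => rfl⟩⟩
  rw [tau, this, csSup_Iic]

def shift (a : UTree C z) (δ : ℝ) : UTree C z where
  ρ := a.ρ + δ
  f := fun t => a.f (t - δ)
  apply_eq_of_ge := fun t ht => a.apply_eq_of_ge _ (by linarith)
  eventually_zero := by
    obtain ⟨s, hs, h⟩ := a.eventually_zero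
    exact ⟨s + δ, by linarith, fun t ht => h _ (by linarith)⟩
  piecewise_const := fun t ht => by
    obtain ⟨ε, hε, h⟩ := a.piecewise_const (t - δ) (by linarith)
    exact ⟨ε, hε, fun u h1 h2 h3 => h (u - δ) (by linarith) (by linarith) (by linarith)⟩

section shift

variable (a b : UTree C z) (δ : ℝ)

theorem shift_shift (δ' : ℝ) : shift (shift a δ) δ' = shift a (δ + δ') :=
  ext' (add_assoc _ _ _) (funext fun t => congrArg a.f (by ring))

theorem shift_zero : shift a 0 = a :=
  ext' (add_zero _) (funext fun t => congrArg a.f (sub_zero t))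

theorem shift_cconst (ℓ : ℝ) : shift (cconst ℓ : UTree C z) δ = cconst (ℓ + δ) :=
  ext' rfl rfl

private theorem forall_lt_sub_iff {p : ℝ → Prop} {t : ℝ} :
    (∀ u, u < t → p (u - δ)) ↔ ∀ u, u < t - δ → p u :=
  ⟨fun h u hu => by simpa using h (u + δ) (by linarith), fun h u hu => h _ (by linarith)⟩

theorem tau_shift : tau (shift a δ) = tau a + δ := by
  have : {s | s ≤ (shift a δ).ρ ∧ ∀ t, t < s → (shift a δ).f t = z}
      = (· + δ) '' {s | s ≤ a.ρ ∧ ∀ t, t < s → a.f t = z} := by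
    rw [image_add_right]
    ext s
    simp only [shift, mem_ofPred_eq, mem_preimage, ← sub_eq_add_neg, sub_le_iff_le_add]
    exact and_congr_right fun _ => forall_lt_sub_iff (p := fun t => a.f t = z) δ
  rw [tau, this, Real.sSup_image_add_const a.tauSet_nonempty a.tauSet_bddAbove]
  rfl

theorem wedgeρ_shift : wedgeρ (shift a δ) (shift b δ) = wedgeρ a b + δ := by
  have : agreeSet (shift a δ) (shift b δ) = (· + δ) '' agreeSet a b := by
    rw [image_add_right]
    ext t
    simp only [agreeSet, shift, mem_ofPred_eq, mem_preimage, ← sub_eq_add_neg, sub_le_iff_le_add,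
      ← min_add_add_right]
    exact and_congr_right fun _ => forall_lt_sub_iff (p := fun u => a.f u = b.f u) δ
  rw [wedgeρ, this, Real.sSup_image_add_const (agreeSet_nonempty a b) (agreeSet_bddAbove a b)]
  rfl

theorem dist_shift : dist (shift a δ) (shift b δ) = dist a b := by
  rw [dist_def, dist_def, wedgeρ_shift]
  change a.ρ + δ + (b.ρ + δ) - 2 * (wedgeρ a b + δ) = _
  ring

theorem badSet_shift : badSet (shift a δ) = (· + δ) '' badSet a := by
  have hIcc : ∀ ε t : ℝ, (· - δ) '' Icc (t - ε) t = Icc (t - δ - ε) (t - δ) := fun ε t => by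
    rw [image_sub_const_Icc, sub_right_comm]
  rw [image_add_right]
  ext t
  simp only [badSet, shift, mem_ofPred_eq, mem_preimage, ← sub_eq_add_neg, sub_lt_iff_lt_add]
  refine and_congr_right fun _ => forall₂_congr fun ε _ => ?_
  simp only [← hIcc, exists_mem_image]

theorem comp_shift : comp (shift a δ) = comp a := by
  rw [comp, comp, Pset, Pset, badSet_shift, ← (Homeomorph.addRight δ).cbRank_image (closure (badSet a))]
  exact congrArg cbRank ((Homeomorph.addRight δ).image_closure _).symm

end shift

def shiftIsometry (δ : ℝ) : UTree C z ≃ᵢ UTree C z where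
  toFun a := shift a δ
  invFun a := shift a (-δ)
  left_inv a := by simp only [shift_shift, add_neg_cancel, shift_zero]
  right_inv a := by simp only [shift_shift, neg_add_cancel, shift_zero]
  isometry_toFun := Isometry.of_dist_eq fun a b => dist_shift a b δ

def reflect (c : ℝ) (a : UTree C z) : UTree C z := shift a (c - 2 * tau a)

section reflect

variable (c : ℝ)

theorem tau_reflect (a : UTree C z) : tau (reflect c a) = c - tau a := by
  rw [reflect, tau_shift]
  ring

theorem reflect_involutive : Function.Involutive (reflect c : UTree C z → UTree C z) := by
  intro a
  rw [reflect, tau_reflect, reflect, shift_shift]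
  convert shift_zero a using 2
  ring

theorem dist_reflect_of_tau_lt {a b : UTree C z} (h : tau a < tau b) :
    dist (reflect c a) (reflect c b) = dist a b := by
  have hw : wedgeρ (reflect c b) (reflect c a) = c - tau b :=
    (wedgeρ_eq_tau_of_tau_lt (by rw [tau_reflect, tau_reflect]; linarith)).trans (tau_reflect c b)
  rw [dist_def, dist_def, wedgeρ_comm, hw, wedgeρ_eq_tau_of_tau_lt h]
  change a.ρ + (c - 2 * tau a) + (b.ρ + (c - 2 * tau b)) - 2 * (c - tau b) = _
  ring

theorem dist_reflect (a b : UTree C z) : dist (reflect c a) (reflect c b) = dist a b := by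
  rcases lt_trichotomy (tau a) (tau b) with h | h | h
  · exact dist_reflect_of_tau_lt c h
  · rw [reflect, reflect, h, dist_shift]
  · rw [dist_comm, dist_reflect_of_tau_lt c h, dist_comm]

theorem comp_reflect (a : UTree C z) : comp (reflect c a) = comp a :=
  comp_shift a _

theorem reflect_cconst (ℓ : ℝ) : reflect c (cconst ℓ : UTree C z) = cconst (c - ℓ) := by
  rw [reflect, tau_cconst, shift_cconst]
  congr 1
  ring

end reflect

def reflectIsometry (c : ℝ) : UTree C z ≃ᵢ UTree C z where
  toEquiv := (reflect_involutive c).toPerm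
  isometry_toFun := Isometry.of_dist_eq (dist_reflect c)

def restrictLevel (Φ : UTree C z ≃ᵢ UTree C z) (hΦ : ∀ a, comp (Φ a) = comp a)
    (α : Ordinal) : level z α ≃ᵢ level z α where
  toEquiv := Φ.toEquiv.subtypeEquiv fun a => by simp only [level, mem_ofPred_eq]; rw [← hΦ a]; rfl
  isometry_toFun := Isometry.of_dist_eq fun a b => Φ.dist_eq a.1 b.1

theorem exists_isometryEquiv_level_extends (α : Ordinal) (θ : ℝ ≃ᵢ ℝ) :
    ∃ ψ : level z α ≃ᵢ level z α,
      ∀ r : ℝ, ψ ⟨cconst r, cconst_mem_level α⟩ = ⟨cconst (θ r), cconst_mem_level α⟩ := by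
  rcases θ.real_eq_add_or_eq_sub with hθ | hθ
  · refine ⟨restrictLevel (shiftIsometry (θ 0)) (comp_shift · _) α, fun r => Subtype.ext ?_⟩
    exact (shift_cconst (θ 0) r).trans (congrArg cconst (hθ r).symm)
  · refine ⟨restrictLevel (reflectIsometry (θ 0)) (comp_reflect _) α, fun r => Subtype.ext ?_⟩
    exact (reflect_cconst (θ 0) r).trans (congrArg cconst (hθ r).symm)

end UTree

theorem stmt8_general (C : Type) (z : C) (α : Ordinal) :
    (∀ θ : ℝ ≃ᵢ ℝ, ∃ ψ : ↥(UTree.level z α) ≃ᵢ ↥(UTree.level z α),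
      ∀ r : ℝ, ψ ⟨UTree.cconst r, UTree.cconst_mem_level α⟩ =
        ⟨UTree.cconst (θ r), UTree.cconst_mem_level α⟩) ∧
    (∀ r : ℝ, 0 < r → ∃ ψ : ↥(UTree.level z α) ≃ᵢ ↥(UTree.level z α),
      ∀ s : ℝ, ψ ⟨UTree.cconst s, UTree.cconst_mem_level α⟩ =
        ⟨UTree.cconst (s + r), UTree.cconst_mem_level α⟩) ∧
    (∃ ψ : ↥(UTree.level z α) ≃ᵢ ↥(UTree.level z α),
      ∀ s : ℝ, ψ ⟨UTree.cconst s, UTree.cconst_mem_level α⟩ =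
        ⟨UTree.cconst (-s), UTree.cconst_mem_level α⟩) :=
  ⟨UTree.exists_isometryEquiv_level_extends α,
    fun r _ => UTree.exists_isometryEquiv_level_extends α (IsometryEquiv.addRight r),
    UTree.exists_isometryEquiv_level_extends α (IsometryEquiv.neg ℝ)⟩

/-- The stabiliser of `L_0` in `Isom(T_κ^{[α]})` surjects onto `Isom(L_0) ≅ Isom(ℝ)`:
every isometry of `ℝ ≅ L_0` extends to an isometry of `T_κ^{[α]}`; in particular every
translation and a reflection of `L_0` extend. -/
theorem stmt8 (κ : Cardinal) (hκ : 3 ≤ κ) (C : Type) (z : C) (hC : IsLabelSet κ C)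
    (α : Ordinal) (hα1 : 1 ≤ α) (hαc : IsCountableOrdinal α) :
    (∀ θ : ℝ ≃ᵢ ℝ, ∃ ψ : ↥(UTree.level z α) ≃ᵢ ↥(UTree.level z α),
      ∀ r : ℝ, ψ ⟨UTree.cconst r, UTree.cconst_mem_level α⟩ =
        ⟨UTree.cconst (θ r), UTree.cconst_mem_level α⟩) ∧
    (∀ r : ℝ, 0 < r → ∃ ψ : ↥(UTree.level z α) ≃ᵢ ↥(UTree.level z α),
      ∀ s : ℝ, ψ ⟨UTree.cconst s, UTree.cconst_mem_level α⟩ =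
        ⟨UTree.cconst (s + r), UTree.cconst_mem_level α⟩) ∧
    (∃ ψ : ↥(UTree.level z α) ≃ᵢ ↥(UTree.level z α),
      ∀ s : ℝ, ψ ⟨UTree.cconst s, UTree.cconst_mem_level α⟩ =
        ⟨UTree.cconst (-s), UTree.cconst_mem_level α⟩) :=
  stmt8_general C z α

end
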